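/- arXiv:2201.00186 — 3 statements merged into one kernel-verified Lean document; each statement's English description precedes it below -/
import Mathlib

section
/- Every strongly connected (biconnected) digraph D of order n >= 6 with out-radius 3 has at most (n-2)^2 arcs. -/
variable {V : Type*}

/-- `ReachWithin A k u v` means the directed distance from `u` to `v` is at most `k`. -/
def ReachWithin (A : V → V → Prop) : ℕ → V → V → Prop
  | 0, u, v => u = v
  | k+1, u, v => u = v ∨ ∃ w, A u w ∧ ReachWithin A k w v

/-- out-eccentricity of `v` is at most `r`. -/
def outEccLe (A : V → V → Prop) (r : ℕ) (v : V) : Prop :=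
  ∀ u, ReachWithin A r v u

/-- in-eccentricity of `v` is at most `r`. -/
def inEccLe (A : V → V → Prop) (r : ℕ) (v : V) : Prop :=
  ∀ u, ReachWithin A r u v

/-- The out-radius of the digraph `A` equals `r`. -/
def outRadiusIs (A : V → V → Prop) (r : ℕ) : Prop :=
  (∃ v, outEccLe A r v) ∧ ∀ v, ¬ outEccLe A (r - 1) v

/-- A digraph is strongly connected (biconnected) if every vertex reaches every other. -/
def StronglyConnected (A : V → V → Prop) : Prop :=
  ∀ u v, ∃ k, ReachWithin A k u v

/-- Number of arcs of the digraph. -/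
noncomputable def arcCard (A : V → V → Prop) : ℕ :=
  {p : V × V | A p.1 p.2}.ncard

noncomputable def outDeg (A : V → V → Prop) (v : V) : ℕ :=
  {w | A v w}.ncard

noncomputable def inDeg (A : V → V → Prop) (v : V) : ℕ :=
  {w | A w v}.ncard

noncomputable def totalDeg (A : V → V → Prop) (v : V) : ℕ :=
  outDeg A v + inDeg A v

/-- The directed distance from `u` to `v` equals `k`. -/
def DistEq (A : V → V → Prop) (k : ℕ) (u v : V) : Prop :=
  ReachWithin A k u v ∧ ∀ j < k, ¬ ReachWithin A j u v

/-- out-eccentricity as a natural number. -/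
noncomputable def outEcc (A : V → V → Prop) (v : V) : ℕ :=
  sInf {k | outEccLe A k v}

/-- in-eccentricity as a natural number. -/
noncomputable def inEcc (A : V → V → Prop) (v : V) : ℕ :=
  sInf {k | inEccLe A k v}

/-- `P` is a bipartition of the digraph `A`: every arc joins the two classes. -/
def Bipartition (A : V → V → Prop) (P : V → Prop) : Prop :=
  ∀ u v, A u v → (P u ↔ ¬ P v)

open Finset

lemma reach2_self (A : V → V → Prop) (u : V) : ReachWithin A 2 u u := Or.inl rfl

lemma reach2_arc (A : V → V → Prop) {u z : V} (h : A u z) : ReachWithin A 2 u z :=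
  Or.inr ⟨z, h, Or.inl rfl⟩

lemma reach2_two (A : V → V → Prop) {u w z : V} (h1 : A u w) (h2 : A w z) :
    ReachWithin A 2 u z :=
  Or.inr ⟨w, h1, Or.inr ⟨z, h2, rfl⟩⟩

lemma reach_to_in_nbr {A : V → V → Prop} {k : ℕ} {u z : V} (h : ReachWithin A k u z) :
    u = z ∨ ∃ y, A y z := by
  induction k generalizing u with
  | zero => exact Or.inl h
  | succ k ih =>
    rcases h with h | ⟨w, hw, hr⟩
    · exact Or.inl h
    · rcases ih hr with rfl | hy
      · exact Or.inr ⟨u, hw⟩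
      · exact Or.inr hy

lemma arcCard_eq [Fintype V] (A : V → V → Prop) [DecidableRel A] :
    arcCard A = ∑ u : V, (univ.filter (fun w => A u w)).card := by
  classical
  rw [arcCard, Set.ncard_eq_toFinset_card']
  rw [show {p : V × V | A p.1 p.2}.toFinset
      = univ.filter (fun p : V × V => A p.1 p.2) by ext p; simp]
  rw [Finset.card_eq_sum_card_fiberwise (f := Prod.fst) (t := univ) (fun x _ => mem_univ _)]
  refine Finset.sum_congr rfl fun u _ => ?_
  refine Finset.card_bij (fun p _ => p.2) ?_ ?_ ?_
  · intro p hp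
    simp only [mem_filter, mem_univ, true_and] at hp ⊢
    obtain ⟨h1, h2⟩ := hp
    rw [← h2]; exact h1
  · intro p hp q hq h
    simp only [mem_filter, mem_univ, true_and] at hp hq
    exact Prod.ext (hp.2.trans hq.2.symm) h
  · intro w hw
    simp only [mem_filter, mem_univ, true_and] at hw ⊢
    exact ⟨(u, w), ⟨hw, rfl⟩, rfl⟩

/-- Every strongly connected loopless digraph of order `n ≥ 6` with out-radius `3`
has at most `(n-2)^2` arcs. -/
theorem stmt1 [Fintype V] (A : V → V → Prop) (hirr : Irreflexive A)
    (hn : 6 ≤ Fintype.card V) (hSC : StronglyConnected A)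
    (hrad : outRadiusIs A 3) :
    arcCard A ≤ (Fintype.card V - 2) ^ 2 := by
  classical
  by_contra hcon
  push_neg at hcon
  obtain ⟨k, hk⟩ : ∃ k, Fintype.card V = k + 6 := ⟨Fintype.card V - 6, by omega⟩
  set dp : V → ℕ := fun u => (univ.filter (fun w => A u w)).card with hdp_def
  set dm : V → ℕ := fun z => (univ.filter (fun w => A w z)).card with hdm_def
  -- total arc count
  have hm : (k+4)^2 + 1 ≤ ∑ u : V, dp u := by
    have h1 : arcCard A = ∑ u : V, dp u := by rw [hdp_def]; exact arcCard_eq A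
    have h2 : Fintype.card V - 2 = k + 4 := by omega
    rw [h2] at hcon
    omega
  -- every vertex has a vertex at distance ≥ 3
  have hfar : ∀ u : V, ∃ z, u ≠ z ∧ ¬ A u z ∧ ∀ w, A u w → ¬ A w z := by
    intro u
    have h2 := hrad.2 u
    rw [show (3:ℕ) - 1 = 2 by norm_num] at h2
    rw [outEccLe] at h2
    push_neg at h2
    obtain ⟨z, hz⟩ := h2
    refine ⟨z, ?_, ?_, ?_⟩
    · rintro rfl; exact hz (reach2_self A u)
    · intro h; exact hz (reach2_arc A h)
    · intro w hw h; exact hz (reach2_two A hw h)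
  -- every vertex has an in-neighbour
  have hin : ∀ z : V, ∃ y, A y z := by
    intro z
    have : Nontrivial V := Fintype.one_lt_card_iff_nontrivial.mp (by omega)
    obtain ⟨u, hu⟩ := exists_ne z
    obtain ⟨j, hj⟩ := hSC u z
    rcases reach_to_in_nbr hj with h | h
    · exact absurd h hu
    · exact h
  have hdm1 : ∀ z : V, 1 ≤ dm z := by
    intro z
    obtain ⟨y, hy⟩ := hin z
    exact Finset.card_pos.mpr ⟨y, by simp [hdm_def, hy]⟩
  -- key disjointness inequality
  have hkey : ∀ u z : V, u ≠ z → ¬ A u z → (∀ w, A u w → ¬ A w z) →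
      dp u + dm z ≤ k + 4 := by
    intro u z huz hA h2p
    have hdisj : Disjoint (univ.filter (fun w => A u w)) (univ.filter (fun w => A w z)) := by
      rw [Finset.disjoint_left]
      intro w hw hw'
      simp only [mem_filter, mem_univ, true_and] at hw hw'
      exact h2p w hw hw'
    have hsub : (univ.filter (fun w => A u w)) ∪ (univ.filter (fun w => A w z))
        ⊆ (univ.erase u).erase z := by
      intro w hw
      simp only [mem_union, mem_filter, mem_univ, true_and] at hw
      rcases hw with hw | hw
      · exact Finset.mem_erase.mpr ⟨fun h => hA (h ▸ hw), Finset.mem_erase.mpr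
          ⟨fun h => hirr u (h ▸ hw), mem_univ w⟩⟩
      · refine Finset.mem_erase.mpr ⟨fun h => hirr z (h ▸ hw), Finset.mem_erase.mpr
          ⟨fun h => hA (h ▸ hw), mem_univ w⟩⟩
    have hcard : ((univ.erase u).erase z).card = k + 4 := by
      rw [Finset.card_erase_of_mem (Finset.mem_erase.mpr ⟨Ne.symm huz, mem_univ z⟩),
        Finset.card_erase_of_mem (mem_univ u), Finset.card_univ]
      omega
    calc dp u + dm z = ((univ.filter (fun w => A u w)) ∪ (univ.filter (fun w => A w z))).card :=
          (Finset.card_union_of_disjoint hdisj).symm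
      _ ≤ ((univ.erase u).erase z).card := Finset.card_le_card hsub
      _ = k + 4 := hcard
  -- every out-degree is at most k+3
  have hdp3 : ∀ u : V, dp u ≤ k + 3 := by
    intro u
    obtain ⟨z, h1, h2, h3⟩ := hfar u
    have := hkey u z h1 h2 h3
    have := hdm1 z
    omega
  -- the set of vertices of maximum out-degree
  set F : Finset V := univ.filter (fun u => dp u = k + 3) with hF_def
  have hmemF : ∀ u : V, u ∈ F ↔ dp u = k + 3 := by
    intro u; simp [hF_def]
  have hf5 : 5 ≤ F.card := by
    set G : Finset V := univ.filter (fun u => ¬ dp u = k + 3) with hG_def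
    have hsplit : ∑ u ∈ F, dp u + ∑ u ∈ G, dp u = ∑ u : V, dp u :=
      Finset.sum_filter_add_sum_filter_not univ _ dp
    have hFsum : ∑ u ∈ F, dp u ≤ F.card * (k+3) := by
      apply Finset.sum_le_card_nsmul
      intro u hu
      exact le_of_eq ((hmemF u).mp hu)
    have hGsum : ∑ u ∈ G, dp u ≤ G.card * (k+2) := by
      apply Finset.sum_le_card_nsmul
      intro u hu
      have h1 : ¬ dp u = k + 3 := by simpa [hG_def] using hu
      have := hdp3 u
      omega
    have hfg : F.card + G.card = k + 6 := by
      rw [hF_def, hG_def, Finset.card_filter_add_card_filter_not, Finset.card_univ]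
      exact hk
    have e1 : (F.card + G.card) * (k+3) = (k+6)*(k+3) := by rw [hfg]
    have e2 : G.card * (k+3) = G.card * (k+2) + G.card := by ring
    nlinarith [hm, hsplit, hFsum, hGsum]
  -- the final counting argument: a single low-degree vertex outside F gives a contradiction
  have hfinal : ∀ t : V, ¬ dp t = k + 3 → dp t + F.card ≤ k + 6 → False := by
    intro t ht hb
    set G : Finset V := univ.filter (fun u => ¬ dp u = k + 3) with hG_def
    have htG : t ∈ G := by simp [hG_def, ht]
    have hsplit : ∑ u ∈ F, dp u + ∑ u ∈ G, dp u = ∑ u : V, dp u :=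
      Finset.sum_filter_add_sum_filter_not univ _ dp
    have hFsum : ∑ u ∈ F, dp u ≤ F.card * (k+3) := by
      apply Finset.sum_le_card_nsmul
      intro u hu
      exact le_of_eq ((hmemF u).mp hu)
    have hpeel : dp t + ∑ u ∈ G.erase t, dp u = ∑ u ∈ G, dp u :=
      Finset.add_sum_erase G dp htG
    have hGsum : ∑ u ∈ G.erase t, dp u ≤ (G.erase t).card * (k+2) := by
      apply Finset.sum_le_card_nsmul
      intro u hu
      have h1 : ¬ dp u = k + 3 := by
        have := Finset.mem_of_mem_erase hu
        simpa [hG_def] using this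
      have := hdp3 u
      omega
    have hfg : F.card + G.card = k + 6 := by
      rw [hF_def, hG_def, Finset.card_filter_add_card_filter_not, Finset.card_univ]
      exact hk
    have hce : (G.erase t).card + 1 = G.card := by
      rw [Finset.card_erase_of_mem htG]
      have : 1 ≤ G.card := Finset.card_pos.mpr ⟨t, htG⟩
      omega
    have e1 : (F.card + ((G.erase t).card + 1)) * (k+3) = (k+6)*(k+3) := by
      rw [hce, hfg]
    nlinarith [hm, hsplit, hFsum, hGsum, hpeel, hb, hf5]
  -- structure of maximum-degree vertices
  have hstr : ∀ u : V, ∃ z y : V, dp u = k + 3 →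
      (A y z ∧ (∀ w, A w z → w = y) ∧ (u ≠ y ∧ u ≠ z ∧ y ≠ z) ∧
        (∀ w, A u w ↔ (w ≠ u ∧ w ≠ y ∧ w ≠ z))) := by
    intro u
    by_cases hu : dp u = k + 3
    swap
    · exact ⟨u, u, fun h => absurd h hu⟩
    obtain ⟨z, h1, h2, h3⟩ := hfar u
    have hdmz : dm z = 1 := by
      have := hkey u z h1 h2 h3
      have := hdm1 z
      omega
    obtain ⟨y, hy⟩ := Finset.card_eq_one.mp hdmz
    have hyz : A y z := by
      have : y ∈ univ.filter (fun w => A w z) := by rw [show univ.filter (fun w => A w z) = {y} from hy]; simp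
      simpa using this
    have huniq : ∀ w, A w z → w = y := by
      intro w hw
      have : w ∈ univ.filter (fun w => A w z) := by simp [hw]
      rw [hy] at this
      simpa using this
    have hne_uy : u ≠ y := fun h => h2 (h ▸ hyz)
    have hne_yz : y ≠ z := fun h => hirr z (h ▸ hyz)
    refine ⟨z, y, fun _ => ⟨hyz, huniq, ⟨hne_uy, h1, hne_yz⟩, ?_⟩⟩
    have hAuy : ¬ A u y := fun h => h3 y h hyz
    have hsub : univ.filter (fun w => A u w) ⊆ ((univ.erase u).erase y).erase z := by
      intro w hw
      simp only [mem_filter, mem_univ, true_and] at hw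
      refine Finset.mem_erase.mpr ⟨fun h => h2 (h ▸ hw), Finset.mem_erase.mpr
        ⟨fun h => hAuy (h ▸ hw), Finset.mem_erase.mpr ⟨fun h => hirr u (h ▸ hw), mem_univ w⟩⟩⟩
    have hzmem : z ∈ (univ.erase u).erase y :=
      Finset.mem_erase.mpr ⟨hne_yz.symm, Finset.mem_erase.mpr ⟨h1.symm, mem_univ z⟩⟩
    have hymem : y ∈ univ.erase u := Finset.mem_erase.mpr ⟨hne_uy.symm, mem_univ y⟩
    have hcard : (((univ.erase u).erase y).erase z).card = k + 3 := by
      rw [Finset.card_erase_of_mem hzmem, Finset.card_erase_of_mem hymem,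
        Finset.card_erase_of_mem (mem_univ u), Finset.card_univ, hk]
      omega
    have heq : univ.filter (fun w => A u w) = ((univ.erase u).erase y).erase z :=
      Finset.eq_of_subset_of_card_le hsub (by rw [hcard]; exact le_of_eq hu.symm)
    intro w
    constructor
    · intro hw
      exact ⟨fun h => hirr u (h ▸ hw), fun h => hAuy (h ▸ hw), fun h => h2 (h ▸ hw)⟩
    · rintro ⟨hw1, hw2, hw3⟩
      have : w ∈ ((univ.erase u).erase y).erase z := Finset.mem_erase.mpr ⟨hw3,
        Finset.mem_erase.mpr ⟨hw2, Finset.mem_erase.mpr ⟨hw1, mem_univ w⟩⟩⟩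
      rw [← heq] at this
      simpa using this
  choose zf yf hzy using hstr
  have hP1 : ∀ u : V, dp u = k + 3 → A (yf u) (zf u) := fun u h => (hzy u h).1
  have hP2 : ∀ u : V, dp u = k + 3 → ∀ w, A w (zf u) → w = yf u := fun u h => (hzy u h).2.1
  have hD1 : ∀ u : V, dp u = k + 3 → u ≠ yf u := fun u h => (hzy u h).2.2.1.1
  have hD2 : ∀ u : V, dp u = k + 3 → u ≠ zf u := fun u h => (hzy u h).2.2.1.2.1
  have hD3 : ∀ u : V, dp u = k + 3 → yf u ≠ zf u := fun u h => (hzy u h).2.2.1.2.2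
  have hP3 : ∀ u : V, dp u = k + 3 → ∀ w, A u w ↔ (w ≠ u ∧ w ≠ yf u ∧ w ≠ zf u) :=
    fun u h => (hzy u h).2.2.2
  -- same far vertex forces same in-neighbour
  have hyy : ∀ u v : V, dp u = k + 3 → dp v = k + 3 → zf u = zf v → yf u = yf v := by
    intro u v hu hv hz
    have := hP1 v hv
    rw [← hz] at this
    exact (hP2 u hu (yf v) this).symm
  -- the crucial pairwise lemma
  have hGL : ∀ u v : V, dp u = k + 3 → dp v = k + 3 → zf u ≠ zf v →
      zf v = yf u ∨ u = zf v ∨ u = yf v := by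
    intro u v hu hv hne
    by_contra hc
    push_neg at hc
    obtain ⟨hc1, hc2, hc3⟩ := hc
    have hA : A u (zf v) := (hP3 u hu (zf v)).mpr ⟨fun h => hc2 h.symm, hc1, hne.symm⟩
    exact hc3 (hP2 v hv u hA)
  -- the set of chosen far vertices
  set W : Finset V := F.image zf with hW_def
  have hWmem : ∀ u : V, dp u = k + 3 → zf u ∈ W := by
    intro u hu
    exact Finset.mem_image.mpr ⟨u, (hmemF u).mpr hu, rfl⟩
  have hWrep : ∀ z ∈ W, ∃ u, dp u = k + 3 ∧ zf u = z := by
    intro z hz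
    obtain ⟨u, hu, rfl⟩ := Finset.mem_image.mp hz
    exact ⟨u, (hmemF u).mp hu, rfl⟩
  -- |W| ≤ 3
  have hW3 : W.card ≤ 3 := by
    by_contra hc
    push_neg at hc
    have hlow : ∀ z ∈ W, F.card ≤ (F.filter (fun u => z = u ∨ z = yf u ∨ z = zf u)).card + 1 := by
      intro z hz
      obtain ⟨u₀, hu₀, rfl⟩ := hWrep z hz
      have hsub : F.filter (fun u => ¬ (zf u₀ = u ∨ zf u₀ = yf u ∨ zf u₀ = zf u)) ⊆ {yf u₀} := by
        intro u hu
        simp only [mem_filter] at hu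
        obtain ⟨huF, hnot⟩ := hu
        push_neg at hnot
        have hA : A u (zf u₀) := (hP3 u ((hmemF u).mp huF) (zf u₀)).mpr
          ⟨hnot.1, hnot.2.1, hnot.2.2⟩
        simp [hP2 u₀ hu₀ u hA]
      have h1 := Finset.card_le_card hsub
      have h2 := Finset.card_filter_add_card_filter_not
        (s := F) (p := fun u => zf u₀ = u ∨ zf u₀ = yf u ∨ zf u₀ = zf u)
      simp only [Finset.card_singleton] at h1
      omega
    have hhigh : ∀ u ∈ F, (W.filter (fun z => z = u ∨ z = yf u ∨ z = zf u)).card ≤ 3 := by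
      intro u hu
      have hsub : W.filter (fun z => z = u ∨ z = yf u ∨ z = zf u)
          ⊆ insert u (insert (yf u) {zf u}) := by
        intro z hz
        simp only [mem_filter] at hz
        simp only [Finset.mem_insert, Finset.mem_singleton]
        exact hz.2
      calc (W.filter (fun z => z = u ∨ z = yf u ∨ z = zf u)).card
          ≤ (insert u (insert (yf u) ({zf u} : Finset V))).card := Finset.card_le_card hsub
        _ ≤ 3 := by
            apply le_trans (Finset.card_insert_le _ _)
            have := Finset.card_insert_le (yf u) ({zf u} : Finset V)
            simp only [Finset.card_singleton] at this
            omega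
    have hswap : ∑ z ∈ W, (F.filter (fun u => z = u ∨ z = yf u ∨ z = zf u)).card
        = ∑ u ∈ F, (W.filter (fun z => z = u ∨ z = yf u ∨ z = zf u)).card := by
      simp only [Finset.card_filter]
      exact Finset.sum_comm
    have hlow2 : W.card * (F.card - 1) ≤ ∑ z ∈ W, (F.filter (fun u => z = u ∨ z = yf u ∨ z = zf u)).card := by
      rw [← smul_eq_mul]
      apply Finset.card_nsmul_le_sum
      intro z hz
      have := hlow z hz
      omega
    have hhigh2 : ∑ u ∈ F, (W.filter (fun z => z = u ∨ z = yf u ∨ z = zf u)).card ≤ F.card * 3 := by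
      apply Finset.sum_le_card_nsmul
      intro u hu
      exact hhigh u hu
    rw [hswap] at hlow2
    have hchain : W.card * (F.card - 1) ≤ F.card * 3 := le_trans hlow2 hhigh2
    have h4 : 4 * (F.card - 1) ≤ W.card * (F.card - 1) := Nat.mul_le_mul_right _ hc
    have := le_trans h4 hchain
    omega
  have hW1 : 1 ≤ W.card := by
    have : (0:ℕ) < F.card := by omega
    obtain ⟨u, hu⟩ := Finset.card_pos.mp this
    exact Finset.card_pos.mpr ⟨zf u, hWmem u ((hmemF u).mp hu)⟩
  -- helper: cardinality of a quadruple
  have hcard4 : ∀ w x y z : V, (insert w (insert x (insert y ({z} : Finset V)))).card ≤ 4 := by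
    intro w x y z
    apply le_trans (Finset.card_insert_le _ _)
    have h1 := Finset.card_insert_le x (insert y ({z} : Finset V))
    have h2 := Finset.card_insert_le y ({z} : Finset V)
    simp only [Finset.card_singleton] at h2
    omega
  have hWcases : W.card = 1 ∨ W.card = 2 ∨ W.card = 3 := by omega
  rcases hWcases with h1 | h2 | h3
  -- CASE |W| = 1
  · obtain ⟨a, ha⟩ := Finset.card_eq_one.mp h1
    have hall : ∀ u, dp u = k+3 → zf u = a := by
      intro u hu
      have := hWmem u hu
      rw [ha] at this
      simpa using this
    obtain ⟨u₀, hu₀, hz₀⟩ := hWrep a (by rw [ha]; simp)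
    have hya : A (yf u₀) a := hz₀ ▸ hP1 u₀ hu₀
    have hyall : ∀ u, dp u = k+3 → yf u = yf u₀ := fun u hu =>
      hyy u u₀ hu hu₀ (by rw [hall u hu, hz₀])
    have hyF : ¬ dp (yf u₀) = k + 3 := by
      intro h
      have h3 := (hP3 (yf u₀) h a).mp hya
      exact h3.2.2 (hall (yf u₀) h).symm
    obtain ⟨z', hz1, hz2, hz3⟩ := hfar (yf u₀)
    have hsub : F.erase z' ⊆ univ.filter (fun w => A w z') := by
      intro u hu
      obtain ⟨hne, huF⟩ := Finset.mem_erase.mp hu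
      have hu3 := (hmemF u).mp huF
      have hz'y : z' ≠ yf u := by
        rw [hyall u hu3]
        exact fun h => hz1 h.symm
      have : A u z' := (hP3 u hu3 z').mpr ⟨hne.symm, hz'y,
        by rw [hall u hu3]; exact fun h => hz2 (h ▸ hya)⟩
      simp [this]
    have hdmz' : F.card - 1 ≤ dm z' := by
      have h1 := Finset.pred_card_le_card_erase (s := F) (a := z')
      have h2 := Finset.card_le_card hsub
      simp only [hdm_def]
      omega
    have hkey2 := hkey (yf u₀) z' hz1 hz2 hz3
    exact hfinal (yf u₀) hyF (by omega)
  -- CASE |W| = 2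
  · obtain ⟨a, b, hab, hWeq⟩ := Finset.card_eq_two.mp h2
    have hall : ∀ u, dp u = k+3 → zf u = a ∨ zf u = b := by
      intro u hu
      have := hWmem u hu
      rw [hWeq] at this
      simpa using this
    obtain ⟨ua, hua, hza⟩ := hWrep a (by rw [hWeq]; simp)
    obtain ⟨ub, hub, hzb⟩ := hWrep b (by rw [hWeq]; simp)
    -- the core argument, assuming a = y_b
    have core2 : ∀ a b : V, a ≠ b →
        (∀ u, dp u = k+3 → zf u = a ∨ zf u = b) →
        (∀ u, dp u = k+3 → zf u = b → yf u = a) →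
        (∃ v, dp v = k+3 ∧ zf v = b) → False := by
      clear hza hzb hua hub hWeq hall hab
      intro a b hab hall hyb hrepb
      obtain ⟨ub, hub, hzb⟩ := hrepb
      have hAab : A a b := by
        have := hP1 ub hub
        rwa [hzb, hyb ub hub hzb] at this
      have haF : ¬ dp a = k + 3 := by
        intro h
        rcases hall a h with h1 | h1
        · exact hD2 a h h1.symm
        · exact hD1 a h (hyb a h h1).symm
      obtain ⟨z'', hz1, hz2, hz3⟩ := hfar a
      have hz''a : z'' ≠ a := fun h => hz1 h.symm
      have hz''b : z'' ≠ b := fun h => hz2 (by rw [h]; exact hAab)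
      have harc : ∀ u, dp u = k+3 → u ≠ z'' → u ≠ b → A u z'' := by
        intro u hu hne hneb
        rcases hall u hu with h1 | h1
        · -- zf u = a
          by_cases hyu : yf u = b
          · exact (hP3 u hu z'').mpr ⟨fun h => hne h.symm,
              fun h => hz''b (h.trans hyu), fun h => hz''a (h.trans h1)⟩
          · rcases hGL u ub hu hub (by rw [h1, hzb]; exact hab) with h | h | h
            · exact absurd (hzb ▸ h).symm hyu
            · exact absurd (h.trans hzb) hneb
            · exfalso
              have huA : u = a := h.trans (hyb ub hub hzb)
              exact hD2 u hu (huA.trans h1.symm)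
        · -- zf u = b, yf u = a
          exact (hP3 u hu z'').mpr ⟨fun h => hne h.symm,
            fun h => hz''a (h.trans (hyb u hu h1)), fun h => hz''b (h.trans h1)⟩
      have hsub : (F.erase z'').erase b ⊆ univ.filter (fun w => A w z'') := by
        intro u hu
        obtain ⟨hneb, hu2⟩ := Finset.mem_erase.mp hu
        obtain ⟨hnez, huF⟩ := Finset.mem_erase.mp hu2
        have := harc u ((hmemF u).mp huF) hnez hneb
        simp [this]
      have hdmz : F.card - 2 ≤ dm z'' := by
        have h1 := Finset.pred_card_le_card_erase (s := F) (a := z'')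
        have h2 := Finset.pred_card_le_card_erase (s := F.erase z'') (a := b)
        have h3 := Finset.card_le_card hsub
        simp only [hdm_def]
        omega
      have hkey2 := hkey a z'' hz1 hz2 hz3
      exact hfinal a haF (by omega)
    by_cases hy1 : a = yf ub
    · refine core2 a b hab hall ?_ ⟨ub, hub, hzb⟩
      intro u hu hz
      rw [hyy u ub hu hub (hz.trans hzb.symm)]
      exact hy1.symm
    by_cases hy2 : b = yf ua
    · refine core2 b a hab.symm (fun u hu => (hall u hu).symm) ?_ ⟨ua, hua, hza⟩
      intro u hu hz
      rw [hyy u ua hu hua (hz.trans hza.symm)]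
      exact hy2.symm
    -- subcase 2a : F is contained in a 4-element set
    · have hsubF : F ⊆ insert b (insert (yf ub) (insert a ({yf ua} : Finset V))) := by
        intro u hu
        have hu3 := (hmemF u).mp hu
        simp only [Finset.mem_insert, Finset.mem_singleton]
        rcases hall u hu3 with hz | hz
        · rcases hGL u ub hu3 hub (by rw [hz, hzb]; exact hab) with h | h | h
          · exfalso
            apply hy2
            rw [hzb] at h
            rw [h, hyy u ua hu3 hua (hz.trans hza.symm)]
          · exact Or.inl (by rw [h, hzb])
          · exact Or.inr (Or.inl h)
        · rcases hGL u ua hu3 hua (by rw [hz, hza]; exact hab.symm) with h | h | h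
          · exfalso
            apply hy1
            rw [hza] at h
            rw [h, hyy u ub hu3 hub (hz.trans hzb.symm)]
          · exact Or.inr (Or.inr (Or.inl (by rw [h, hza])))
          · exact Or.inr (Or.inr (Or.inr h))
      have := Finset.card_le_card hsubF
      have := hcard4 b (yf ub) a (yf ua)
      omega
  -- CASE |W| = 3
  · have hmap : ∀ u ∈ F, zf u ∈ W := fun u hu => hWmem u ((hmemF u).mp hu)
    have hlt : W.card < F.card := by omega
    obtain ⟨u₁, hu₁F, u₂, hu₂F, hne12, heq12⟩ :=
      Finset.exists_ne_map_eq_of_card_lt_of_maps_to hlt hmap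
    have hu₁ : dp u₁ = k + 3 := (hmemF u₁).mp hu₁F
    have hu₂ : dp u₂ = k + 3 := (hmemF u₂).mp hu₂F
    obtain ⟨c', hc'⟩ : ∃ c', zf u₁ = c' := ⟨_, rfl⟩
    have hzu₂ : zf u₂ = c' := heq12 ▸ hc'
    have hc'W : c' ∈ W := hc' ▸ hWmem u₁ hu₁
    have hWec : (W.erase c').card = 2 := by
      rw [Finset.card_erase_of_mem hc'W]
      omega
    obtain ⟨a', b', hab', hWe⟩ := Finset.card_eq_two.mp hWec
    have ha'W : a' ∈ W.erase c' := by rw [hWe]; simp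
    have hb'W : b' ∈ W.erase c' := by rw [hWe]; simp
    have hac : a' ≠ c' := (Finset.mem_erase.mp ha'W).1
    have hbc : b' ≠ c' := (Finset.mem_erase.mp hb'W).1
    obtain ⟨va, hva, hza⟩ := hWrep a' (Finset.mem_of_mem_erase ha'W)
    obtain ⟨vb, hvb, hzb⟩ := hWrep b' (Finset.mem_of_mem_erase hb'W)
    have hall : ∀ u, dp u = k+3 → zf u = c' ∨ zf u = a' ∨ zf u = b' := by
      intro u hu
      have h1 := hWmem u hu
      rw [← Finset.insert_erase hc'W, hWe] at h1
      simpa using h1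
    have hyy2 : yf u₂ = yf u₁ := hyy u₂ u₁ hu₂ hu₁ (hzu₂.trans hc'.symm)
    -- the beta core: the unique in-neighbour of c' is one of the other two far vertices
    have bcore : ∀ a b : V, a ≠ b → a ≠ c' → b ≠ c' →
        (∀ u, dp u = k+3 → zf u = c' ∨ zf u = a ∨ zf u = b) →
        (∃ v, dp v = k+3 ∧ zf v = a) → (∃ v, dp v = k+3 ∧ zf v = b) →
        yf u₁ = a → False := by
      intro a b hab hac hbc hall hrepa hrepb hyc
      obtain ⟨va, hva, hza⟩ := hrepa
      obtain ⟨vb, hvb, hzb⟩ := hrepb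
      -- step 1 : vertices with far vertex c' are exactly among {b, yf vb}
      have step1 : ∀ u, dp u = k+3 → zf u = c' → u = b ∨ u = yf vb := by
        intro u hu hz
        rcases hGL u vb hu hvb (by rw [hz, hzb]; exact fun h => hbc h.symm) with h | h | h
        · exfalso
          have : yf u = yf u₁ := hyy u u₁ hu hu₁ (hz.trans hc'.symm)
          rw [this, hyc, hzb] at h
          exact hab h.symm
        · exact Or.inl (h.trans hzb)
        · exact Or.inr h
      have e1 := step1 u₁ hu₁ hc'
      have e2 := step1 u₂ hu₂ hzu₂
      have hbu : b = u₁ ∨ b = u₂ := by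
        rcases e1 with h1|h1
        · exact Or.inl h1.symm
        · rcases e2 with h2|h2
          · exact Or.inr h2.symm
          · exact absurd (h1.trans h2.symm) hne12
      have hdu : yf vb = u₁ ∨ yf vb = u₂ := by
        rcases e1 with h1|h1
        · rcases e2 with h2|h2
          · exact absurd (h1.trans h2.symm) hne12
          · exact Or.inr h2.symm
        · exact Or.inl h1.symm
      have hbF : dp b = k + 3 := by rcases hbu with h|h <;> rw [h] <;> assumption
      have hzbc : zf b = c' := by rcases hbu with h|h <;> rw [h] <;> assumption
      have hdF : dp (yf vb) = k + 3 := by rcases hdu with h|h <;> rw [h] <;> assumption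
      have hzdc : zf (yf vb) = c' := by rcases hdu with h|h <;> rw [h] <;> assumption
      have hda : yf vb ≠ a := by
        intro h
        have h2 : yf (yf vb) = yf u₁ := hyy (yf vb) u₁ hdF hu₁ (hzdc.trans hc'.symm)
        rw [h, hyc] at h2
        exact hD1 a (h ▸ hdF) h2.symm
      -- step 2 : yf va = b
      have step2 : yf va = b := by
        rcases hGL va vb hva hvb (by rw [hza, hzb]; exact hab) with h | h | h
        · rw [hzb] at h; exact h.symm
        · exfalso
          have hvab : va = b := h.trans hzb
          have : zf va = c' := by rw [hvab]; exact hzbc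
          rw [hza] at this
          exact hac this
        · exfalso
          have : zf va = c' := by rw [h]; exact hzdc
          rw [hza] at this
          exact hac this
      -- step 3 : vertices with far vertex a are equal to c'
      have step3 : ∀ u, dp u = k+3 → zf u = a → u = c' := by
        intro u hu hz
        rcases hGL u u₁ hu hu₁ (by rw [hz, hc']; exact hac) with h | h | h
        · exfalso
          have : yf u = yf va := hyy u va hu hva (hz.trans hza.symm)
          rw [this, step2, hc'] at h
          exact hbc h.symm
        · exact h.trans hc'
        · exfalso
          rw [hyc] at h
          exact hD2 u hu (h.trans hz.symm)
      -- step 4 : vertices with far vertex b are equal to a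
      have step4 : ∀ u, dp u = k+3 → zf u = b → u = a := by
        intro u hu hz
        rcases hGL u va hu hva (by rw [hz, hza]; exact hab.symm) with h | h | h
        · exfalso
          have : yf u = yf vb := hyy u vb hu hvb (hz.trans hzb.symm)
          rw [this, hza] at h
          exact hda h.symm
        · exact h.trans hza
        · exfalso
          rw [step2] at h
          exact hD2 u hu (h.trans hz.symm)
      -- conclusion : F has at most 4 elements
      have hsubF : F ⊆ insert c' (insert a (insert b ({yf vb} : Finset V))) := by
        intro u hu
        have hu3 := (hmemF u).mp hu
        simp only [Finset.mem_insert, Finset.mem_singleton]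
        rcases hall u hu3 with hz | hz | hz
        · rcases step1 u hu3 hz with h | h
          · exact Or.inr (Or.inr (Or.inl h))
          · exact Or.inr (Or.inr (Or.inr h))
        · exact Or.inl (step3 u hu3 hz)
        · exact Or.inr (Or.inl (step4 u hu3 hz))
      have := Finset.card_le_card hsubF
      have := hcard4 c' a b (yf vb)
      omega
    by_cases hA : yf u₁ = a'
    · exact bcore a' b' hab' hac hbc hall ⟨va, hva, hza⟩ ⟨vb, hvb, hzb⟩ hA
    by_cases hB : yf u₁ = b'
    · refine bcore b' a' hab'.symm hbc hac ?_ ⟨vb, hvb, hzb⟩ ⟨va, hva, hza⟩ hB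
      intro u hu
      rcases hall u hu with h|h|h
      · exact Or.inl h
      · exact Or.inr (Or.inr h)
      · exact Or.inr (Or.inl h)
    -- alpha case : yf u₁ is neither a' nor b'
    · have stepa : ∀ u, dp u = k+3 → zf u = c' → u = a' ∨ u = yf va := by
        intro u hu hz
        rcases hGL u va hu hva (by rw [hz, hza]; exact fun h => hac h.symm) with h | h | h
        · exfalso
          have : yf u = yf u₁ := hyy u u₁ hu hu₁ (hz.trans hc'.symm)
          rw [this, hza] at h
          exact hA h.symm
        · exact Or.inl (h.trans hza)
        · exact Or.inr h
      have stepb : ∀ u, dp u = k+3 → zf u = c' → u = b' ∨ u = yf vb := by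
        intro u hu hz
        rcases hGL u vb hu hvb (by rw [hz, hzb]; exact fun h => hbc h.symm) with h | h | h
        · exfalso
          have : yf u = yf u₁ := hyy u u₁ hu hu₁ (hz.trans hc'.symm)
          rw [this, hzb] at h
          exact hB h.symm
        · exact Or.inl (h.trans hzb)
        · exact Or.inr h
      have ea1 := stepa u₁ hu₁ hc'
      have ea2 := stepa u₂ hu₂ hzu₂
      have eb1 := stepb u₁ hu₁ hc'
      have eb2 := stepb u₂ hu₂ hzu₂
      have ha'u : a' = u₁ ∨ a' = u₂ := by
        rcases ea1 with h1|h1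
        · exact Or.inl h1.symm
        · rcases ea2 with h2|h2
          · exact Or.inr h2.symm
          · exact absurd (h1.trans h2.symm) hne12
      have hyau : yf va = u₁ ∨ yf va = u₂ := by
        rcases ea1 with h1|h1
        · rcases ea2 with h2|h2
          · exact absurd (h1.trans h2.symm) hne12
          · exact Or.inr h2.symm
        · exact Or.inl h1.symm
      have hb'u : b' = u₁ ∨ b' = u₂ := by
        rcases eb1 with h1|h1
        · exact Or.inl h1.symm
        · rcases eb2 with h2|h2
          · exact Or.inr h2.symm
          · exact absurd (h1.trans h2.symm) hne12
      have hybu : yf vb = u₁ ∨ yf vb = u₂ := by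
        rcases eb1 with h1|h1
        · rcases eb2 with h2|h2
          · exact absurd (h1.trans h2.symm) hne12
          · exact Or.inr h2.symm
        · exact Or.inl h1.symm
      have hayb : a' = yf vb := by
        rcases ha'u with h1|h1 <;> rcases hybu with h2|h2
        · exact h1.trans h2.symm
        · rcases eb1 with h3|h3
          · exact absurd (h1.trans h3) hab'
          · exact h1.trans h3
        · rcases eb2 with h3|h3
          · exact absurd (h1.trans h3) hab'
          · exact h1.trans h3
        · exact h1.trans h2.symm
      have hbya : b' = yf va := by
        rcases hb'u with h1|h1 <;> rcases hyau with h2|h2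
        · exact h1.trans h2.symm
        · rcases ea1 with h3|h3
          · exact absurd (h1.trans h3).symm hab'
          · exact h1.trans h3
        · rcases ea2 with h3|h3
          · exact absurd (h1.trans h3).symm hab'
          · exact h1.trans h3
        · exact h1.trans h2.symm
      -- now every vertex of F lies in {c', yf u₁, a', b'}
      have hsubF : F ⊆ insert c' (insert (yf u₁) (insert a' ({b'} : Finset V))) := by
        intro u hu
        have hu3 := (hmemF u).mp hu
        simp only [Finset.mem_insert, Finset.mem_singleton]
        rcases hall u hu3 with hz | hz | hz
        · rcases stepa u hu3 hz with h | h
          · exact Or.inr (Or.inr (Or.inl h))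
          · exact Or.inr (Or.inr (Or.inr (h.trans hbya.symm)))
        · rcases hGL u u₁ hu3 hu₁ (by rw [hz, hc']; exact hac) with h | h | h
          · exfalso
            have : yf u = yf va := hyy u va hu3 hva (hz.trans hza.symm)
            rw [this, hc'] at h
            exact hbc (hbya.trans h.symm)
          · exact Or.inl (h.trans hc')
          · exact Or.inr (Or.inl h)
        · rcases hGL u u₁ hu3 hu₁ (by rw [hz, hc']; exact hbc) with h | h | h
          · exfalso
            have : yf u = yf vb := hyy u vb hu3 hvb (hz.trans hzb.symm)
            rw [this, hc'] at h
            exact hac (hayb.trans h.symm)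
          · exact Or.inl (h.trans hc')
          · exact Or.inr (Or.inl h)
      have := Finset.card_le_card hsubF
      have := hcard4 c' (yf u₁) a' b'
      omega
end

section
/- Let D be a digraph of order n with out-radius r >= 2. Then the number of arcs of D satisfies |A(D)| <= n(n-r) + (r^2 - r - 2)/2. -/
variable {V : Type*}

/-!
Fix a vertex `v` of out-eccentricity `r`, grade the vertices by their distance `L` from `v`
(levels `0, …, r`, all nonempty) and let `S` be the set of vertices that cannot reach `v`.
A vertex outside `S` other than `v` reaches everything, hence has out-eccentricity at least `r`
and out-degree at most `n - r`; the out-neighbours of `v` lie on level `1`. `S` is closed under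
out-arcs and an arc climbs at most one level, so pairs of `S` whose levels differ by at least two
are non-arcs. Each level that `S` misses holds a vertex outside `S`, so a small complement forces
`S` to occupy many levels, say `k`, and then `S` has at least `(k - 1)(k - 2)/2` such far pairs.
Balancing these counts yields the bound, the constant `(r - 2)(r + 1)/2` being attained when `S`
has one vertex on each of the levels `1, …, r`.
-/

open Finset

namespace ReachWithin
variable {A : V → V → Prop}

lemma refl (k : ℕ) (u : V) : ReachWithin A k u u := by
  cases k <;> simp [ReachWithin]

lemma succ {k : ℕ} {u w : V} (h : ReachWithin A k u w) : ReachWithin A (k + 1) u w := by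
  induction k generalizing u with
  | zero => exact Or.inl h
  | succ k ih =>
    rcases h with h | ⟨x, hx, h⟩
    · exact Or.inl h
    · exact Or.inr ⟨x, hx, ih h⟩

lemma mono {j k : ℕ} (hjk : j ≤ k) {u w : V} (h : ReachWithin A j u w) :
    ReachWithin A k u w := by
  induction k, hjk using Nat.le_induction with
  | base => exact h
  | succ k _ ih => exact ih.succ

lemma trans {a b : ℕ} {u w x : V} (h₁ : ReachWithin A a u w) (h₂ : ReachWithin A b w x) :
    ReachWithin A (a + b) u x := by
  induction a generalizing u with
  | zero => cases h₁; simpa using h₂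
  | succ a ih =>
    rcases h₁ with rfl | ⟨y, hy, h⟩
    · exact h₂.mono (by omega)
    · rw [Nat.add_right_comm]
      exact Or.inr ⟨y, hy, ih h⟩

lemma snoc {k : ℕ} {u w x : V} (h : ReachWithin A k u w) (hA : A w x) :
    ReachWithin A (k + 1) u x :=
  h.trans (Or.inr ⟨x, hA, rfl⟩)

lemma eq_or_exists_snoc {k : ℕ} {u x : V} (h : ReachWithin A (k + 1) u x) :
    u = x ∨ ∃ w, ReachWithin A k u w ∧ A w x := by
  induction k generalizing u with
  | zero =>
    rcases h with h | ⟨w, hw, rfl⟩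
    · exact Or.inl h
    · exact Or.inr ⟨u, rfl, hw⟩
  | succ k ih =>
    rcases h with h | ⟨w, huw, h⟩
    · exact Or.inl h
    · rcases ih h with rfl | ⟨y, hwy, hyx⟩
      · exact Or.inr ⟨u, refl _ _, huw⟩
      · exact Or.inr ⟨y, Or.inr ⟨w, huw, hwy⟩, hyx⟩

end ReachWithin

/-- Directed distance, with the junk value `0` (`sInf ∅`) when `u` is unreachable from `z`. -/
noncomputable def reachDist (A : V → V → Prop) (z u : V) : ℕ := sInf {k | ReachWithin A k z u}

section ReachDist
variable {A : V → V → Prop} {z u w : V} {k : ℕ}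

lemma reachWithin_reachDist (h : ReachWithin A k z u) : ReachWithin A (reachDist A z u) z u :=
  Nat.sInf_mem (s := {k | ReachWithin A k z u}) ⟨k, h⟩

lemma reachDist_le (h : ReachWithin A k z u) : reachDist A z u ≤ k :=
  Nat.sInf_le h

lemma reachDist_eq_zero_iff (h : ReachWithin A k z u) : reachDist A z u = 0 ↔ z = u := by
  refine ⟨fun h0 => ?_, fun hzu => Nat.le_zero.mp (reachDist_le (hzu ▸ ReachWithin.refl 0 z))⟩
  simpa [h0, ReachWithin] using reachWithin_reachDist h

lemma reachDist_le_succ_of_adj (h : ReachWithin A k z u) (hA : A u w) :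
    reachDist A z w ≤ reachDist A z u + 1 :=
  reachDist_le ((reachWithin_reachDist h).snoc hA)

lemma reachDist_eq_one_of_adj (hirr : Irreflexive A) (hA : A z w) : reachDist A z w = 1 := by
  have h1 : ReachWithin A 1 z w := Or.inr ⟨w, hA, rfl⟩
  have h0 : reachDist A z w ≠ 0 := fun h0 =>
    hirr z (((reachDist_eq_zero_iff h1).mp h0) ▸ hA)
  have := reachDist_le h1
  omega

lemma exists_reachDist_eq (h : ReachWithin A k z u) {i : ℕ} (hi : i ≤ reachDist A z u) :
    ∃ w, reachDist A z w = i := by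
  induction hd : reachDist A z u generalizing u k with
  | zero => exact ⟨u, by omega⟩
  | succ d ih =>
    rcases Nat.lt_or_eq_of_le hi with hi | hi
    · have hd' := hd ▸ reachWithin_reachDist h
      rcases hd'.eq_or_exists_snoc with rfl | ⟨w, hw, hwu⟩
      · simp [(reachDist_eq_zero_iff h).mpr rfl] at hd
      · have := reachDist_le hw
        have := reachDist_le_succ_of_adj hw hwu
        exact ih hw (by omega) (by omega)
    · exact ⟨u, by omega⟩

lemma exists_reachDist_eq_of_not_outEccLe (hz : ∀ x, ∃ k, ReachWithin A k z x) {r : ℕ}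
    (hecc : ¬ outEccLe A (r - 1) z) {i : ℕ} (hi : i ≤ r) : ∃ w, reachDist A z w = i := by
  obtain ⟨u, hu⟩ := not_forall.mp hecc
  obtain ⟨k, hk⟩ := hz u
  refine exists_reachDist_eq hk ?_
  by_contra hlt
  exact hu ((reachWithin_reachDist hk).mono (by omega))

end ReachDist

lemma card_sdiff_image_add_card_filter_le {α β : Type*} [Fintype α] [DecidableEq β] (L : α → β)
    {W : Finset β} (hW : ∀ j ∈ W, ∃ x, L x = j) (S : Finset α) :
    #(W \ S.image L) + #{x ∈ S | L x ∈ W} ≤ #{x | L x ∈ W} := by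
  classical
  have hmissed : #(W \ S.image L) ≤ #{x | L x ∈ W ∧ x ∉ S} := by
    refine card_le_card_of_surjOn L fun j hj => ?_
    simp only [coe_sdiff, coe_image, Set.mem_sdiff, mem_coe, Set.mem_image, not_exists,
      not_and] at hj
    obtain ⟨x, rfl⟩ := hW _ hj.1
    exact ⟨x, by simpa using ⟨hj.1, fun hx => hj.2 x hx rfl⟩, rfl⟩
  have hS : #{x ∈ S | L x ∈ W} = #{x | L x ∈ W ∧ x ∈ S} := by
    congr 1; ext; simp [and_comm]
  rw [hS, ← card_filter_add_card_filter_not (s := {x | L x ∈ W}) (· ∈ S), filter_filter,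
    filter_filter]
  omega

section FarPairs
variable {α : Type*} (L : α → ℕ)

def farPairCount (S : Finset α) : ℕ := ∑ x ∈ S, #{y ∈ S | L x + 2 ≤ L y}

lemma farPairCount_insert [DecidableEq α] {S : Finset α} {a : α} (ha : a ∉ S) :
    farPairCount L (insert a S) =
      farPairCount L S + #{y ∈ S | L a + 2 ≤ L y} + #{y ∈ S | L y + 2 ≤ L a} := by
  simp only [farPairCount, card_filter, sum_insert ha, sum_add_distrib,
    show ¬ L a + 2 ≤ L a by omega, if_false]
  ring

variable {L}

lemma choose_two_le_farPairCount [DecidableEq α] {R : Finset α} (hR : Set.InjOn L R) :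
    (#R - 1).choose 2 ≤ farPairCount L R := by
  induction R using Finset.induction_on_max_value L with
  | empty => simp
  | insert a s ha hmax ih =>
    have hinj : Set.InjOn L s := hR.mono (by simp)
    have hnear : #{y ∈ s | ¬ L y + 2 ≤ L a} ≤ 1 := by
      refine card_le_one.mpr fun y hy y' hy' => ?_
      simp only [mem_filter] at hy hy'
      have hya : L y ≠ L a := fun h => ha (hR (by simp [hy.1]) (by simp) h ▸ hy.1)
      have hy'a : L y' ≠ L a := fun h => ha (hR (by simp [hy'.1]) (by simp) h ▸ hy'.1)
      exact hinj hy.1 hy'.1 (by have := hmax y hy.1; have := hmax y' hy'.1; omega)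
    have hdown := card_filter_add_card_filter_not (s := s) (fun y => L y + 2 ≤ L a)
    have hchoose : (#s).choose 2 ≤ (#s - 1).choose 2 + (#s - 1) := by
      cases #s with
      | zero => simp
      | succ m => simp [Nat.choose_succ_succ, add_comm]
    rw [farPairCount_insert L ha, card_insert_of_notMem ha, Nat.add_sub_cancel]
    have := ih hinj
    omega

lemma card_image_le_card_far_add (S : Finset α) (hS : ∀ y ∈ S, 1 ≤ L y) {x : α} (hx : 1 ≤ L x) :
    #(S.image L) ≤ #{y ∈ S | L x + 2 ≤ L y} + #{y ∈ S | L y + 2 ≤ L x} +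
      if 2 ≤ L x then 3 else 2 := by
  rw [← card_filter_add_card_filter_not (s := S.image L) (fun j => L x ≤ j + 1 ∧ j ≤ L x + 1),
    add_comm]
  gcongr
  · calc #{j ∈ S.image L | ¬(L x ≤ j + 1 ∧ j ≤ L x + 1)}
        ≤ #({y ∈ S | L x + 2 ≤ L y}.image L ∪ {y ∈ S | L y + 2 ≤ L x}.image L) := by
          refine card_le_card fun j hj => ?_
          obtain ⟨⟨y, hy, rfl⟩, hfar⟩ := by simpa only [mem_filter, mem_image] using hj
          simp only [mem_union, mem_image, mem_filter]
          by_cases h : L x + 2 ≤ L y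
          · exact Or.inl ⟨y, ⟨hy, h⟩, rfl⟩
          · exact Or.inr ⟨y, ⟨hy, by omega⟩, rfl⟩
      _ ≤ _ := (card_union_le _ _).trans (add_le_add card_image_le card_image_le)
  · have hnear : {j ∈ S.image L | L x ≤ j + 1 ∧ j ≤ L x + 1} ⊆ Icc (max 1 (L x - 1)) (L x + 1) := by
      intro j hj
      obtain ⟨⟨z, hz, rfl⟩, hzx⟩ := by simpa only [mem_filter, mem_image] using hj
      have := hS z hz
      simp only [mem_Icc]
      omega
    refine (card_le_card hnear).trans ?_
    split_ifs <;> simp <;> omega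

/-- Deleting a vertex that shares its level with another keeps the occupied levels, and that
vertex is at level distance at least two from all of `S` except on at most three occupied levels
(two if it lies on level `1`); once `L` is injective on `S`, `hrep` and
`choose_two_le_farPairCount` conclude. -/
theorem card_mul_le_farPairCount_add [DecidableEq α] (q c : ℤ) (S : Finset α)
    (hS : ∀ x ∈ S, 1 ≤ L x) (hq : q ≤ #(S.image L) - 2)
    (hrep : #(S.image L) * q ≤ (#(S.image L) - 1).choose 2 + c) :
    #S * q ≤ (#{x ∈ S | 2 ≤ L x} : ℤ) - #{j ∈ S.image L | 2 ≤ j} + farPairCount L S + c := by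
  induction S using Finset.strongInduction with
  | H S ih =>
  by_cases hinj : Set.InjOn L S
  · have hextra : #{j ∈ S.image L | 2 ≤ j} = #{x ∈ S | 2 ≤ L x} := by
      rw [filter_image, card_image_of_injOn (hinj.mono (coe_subset.mpr (filter_subset _ _)))]
    have := choose_two_le_farPairCount hinj
    rw [hextra, ← card_image_of_injOn hinj]
    rw [← card_image_of_injOn hinj] at this
    linarith
  obtain ⟨x, hx, y, hy, hxy, hne⟩ : ∃ x ∈ S, ∃ y ∈ S, L x = L y ∧ x ≠ y := by
    simpa [Set.InjOn] using hinj
  set S' := S.erase x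
  have hx' : x ∉ S' := notMem_erase x S
  have hS' : S = insert x S' := (insert_erase hx).symm
  have himage : S'.image L = S.image L := by
    rw [hS', image_insert,
      insert_eq_of_mem (mem_image.mpr ⟨y, mem_erase.mpr ⟨hne.symm, hy⟩, hxy.symm⟩)]
  have ih' := ih S' (erase_ssubset hx) (fun z hz => hS z (mem_of_mem_erase hz))
    (himage ▸ hq) (himage ▸ hrep)
  have hfar := card_image_le_card_far_add S' (fun z hz => hS z (mem_of_mem_erase hz)) (hS x hx)
  rw [himage] at ih' hfar
  have hcard : #S = #S' + 1 := by rw [hS', card_insert_of_notMem hx']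
  have hpairs : farPairCount L S = farPairCount L S' + #{z ∈ S' | L x + 2 ≤ L z} +
      #{z ∈ S' | L z + 2 ≤ L x} := by rw [hS', farPairCount_insert L hx']
  have hextra : #{z ∈ S | 2 ≤ L z} = #{z ∈ S' | 2 ≤ L z} + if 2 ≤ L x then 1 else 0 := by
    rw [hS', filter_insert]
    split_ifs <;> simp [card_insert_of_notMem, hx']
  have hstep : q ≤ ((#{z ∈ S' | L x + 2 ≤ L z} + #{z ∈ S' | L z + 2 ≤ L x} +
      if 2 ≤ L x then 1 else 0 : ℕ) : ℤ) := by
    split_ifs at hfar ⊢ <;> omega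
  rw [hcard, hpairs, hextra]
  push_cast [add_mul] at hstep ⊢
  linarith

end FarPairs

lemma two_mul_sq_sub_sub_two_div_two {r : ℕ} (hr : 2 ≤ r) :
    2 * (((r ^ 2 - r - 2) / 2 : ℕ) : ℤ) = ((r : ℤ) - 2) * (r + 1) := by
  have hsq : r ^ 2 = r * (r - 1) + r := by
    cases r with
    | zero => omega
    | succ m => simp [sq, Nat.succ_mul, Nat.mul_succ]
  have heven : Even (r ^ 2 - r - 2) := by
    rw [hsq, Nat.add_sub_cancel]; exact (Nat.even_mul_pred_self r).tsub even_two
  have hle : r + 2 ≤ r ^ 2 := by nlinarith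
  rw [← Nat.cast_two (R := ℤ), ← Nat.cast_mul, Nat.two_mul_div_two_of_even heven]
  rw [Nat.cast_sub (by omega), Nat.cast_sub (by omega)]
  push_cast
  ring

lemma mul_le_choose_two_add {k : ℕ} {q c r : ℤ} (hr : 2 ≤ r) (hc : 2 * c = (r - 2) * (r + 1))
    (hqk : q ≤ k - 2) (hqr : q ≤ r - 2) : k * q ≤ ((k - 1).choose 2 : ℕ) + c := by
  have hchoose : 2 * (((k - 1).choose 2 : ℕ) : ℤ) = (k - 1 : ℕ) * ((k - 1 - 1 : ℕ) : ℤ) := by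
    rw [Nat.choose_two_right, ← Nat.cast_two (R := ℤ), ← Nat.cast_mul, ← Nat.cast_mul,
      Nat.two_mul_div_two_of_even (Nat.even_mul_pred_self _)]
  rcases le_or_gt q 0 with hq | hq
  · nlinarith
  · have hk : 3 ≤ k := by omega
    push_cast [Nat.cast_sub (by omega : 1 ≤ k), Nat.cast_sub (by omega : 1 ≤ k - 1)] at hchoose
    nlinarith [mul_nonneg (by linarith : (0:ℤ) ≤ k - q - 1) (by linarith : (0:ℤ) ≤ k - q - 2),
      mul_nonneg (by linarith : (0:ℤ) ≤ r - 2 - q) (by linarith : (0:ℤ) ≤ r + 1 + q)]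

lemma card_add_le_card_add_card_image [Fintype V] {A : V → V → Prop} {r : ℕ} {v : V}
    (hv : outEccLe A r v) (hecc : ¬ outEccLe A (r - 1) v) (S : Finset V) :
    r + 1 + #S ≤ Fintype.card V + #(S.image (reachDist A v)) := by
  have hlevels := card_sdiff_image_add_card_filter_le (reachDist A v) (W := range (r + 1))
    (fun j hj => exists_reachDist_eq_of_not_outEccLe (fun x => ⟨r, hv x⟩) hecc
      (Nat.lt_succ_iff.mp (mem_range.mp hj))) S
  rw [filter_true_of_mem fun x _ => mem_range.mpr (Nat.lt_succ_of_le (reachDist_le (hv x)))]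
    at hlevels
  have hmissed := le_card_sdiff (S.image (reachDist A v)) (range (r + 1))
  have := card_le_univ {x | reachDist A v x ∈ range (r + 1)}
  rw [card_range] at hmissed
  omega

section Degrees
variable [Fintype V] {A : V → V → Prop} [DecidableRel A]

lemma outDeg_eq_card (u : V) : outDeg A u = #{w | A u w} := by
  rw [outDeg, ← Set.ncard_coe_finset]; simp

lemma arcCard_eq_sum_outDeg : arcCard A = ∑ u, outDeg A u := by
  rw [arcCard, Set.ncard_eq_toFinset_card', Set.toFinset_ofPred, card_filter,
    Fintype.sum_prod_type]
  simp only [outDeg_eq_card, card_filter]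

lemma outDeg_add_le_card_of_not_outEccLe (hirr : Irreflexive A) {r : ℕ} (hr : 1 ≤ r) {u : V}
    (hu : ∀ x, ∃ k, ReachWithin A k u x) (hecc : ¬ outEccLe A (r - 1) u) :
    outDeg A u + r ≤ Fintype.card V := by
  set N : Finset V := {w | A u w}
  have hN : ∀ w ∈ N, reachDist A u w = 1 := fun w hw =>
    reachDist_eq_one_of_adj hirr (by simpa [N] using hw)
  have hlevels := card_sdiff_image_add_card_filter_le (reachDist A u) (W := range (r + 1))
    (fun j hj => exists_reachDist_eq_of_not_outEccLe hu hecc (Nat.lt_succ_iff.mp (mem_range.mp hj)))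
    N
  have himage : #(N.image (reachDist A u)) ≤ 1 := by
    refine card_le_one.mpr fun i hi j hj => ?_
    obtain ⟨w, hw, rfl⟩ := mem_image.mp hi
    obtain ⟨w', hw', rfl⟩ := mem_image.mp hj
    rw [hN w hw, hN w' hw']
  have hmissed := le_card_sdiff (N.image (reachDist A u)) (range (r + 1))
  have hall : #{w ∈ N | reachDist A u w ∈ range (r + 1)} = outDeg A u := by
    rw [outDeg_eq_card, filter_true_of_mem]
    intro w hw
    rw [hN w hw, mem_range]
    omega
  rw [card_range] at hmissed
  have := card_le_univ {x | reachDist A u x ∈ range (r + 1)}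
  omega

end Degrees

section Center
variable [Fintype V] [DecidableEq V] {A : V → V → Prop} [DecidableRel A] {r : ℕ} {v : V}

lemma outDeg_add_card_filter_le_of_center (hirr : Irreflexive A) (hr : 1 ≤ r)
    (hv : outEccLe A r v) (hecc : ¬ outEccLe A (r - 1) v) (S : Finset V) :
    outDeg A v + #{x ∈ S | 2 ≤ reachDist A v x} + r ≤
      Fintype.card V + #{j ∈ S.image (reachDist A v) | 2 ≤ j} := by
  set L := reachDist A v
  have hlevels := card_sdiff_image_add_card_filter_le L (W := Icc 2 r)
    (fun j hj => exists_reachDist_eq_of_not_outEccLe (fun x => ⟨r, hv x⟩) hecc (mem_Icc.mp hj).2) S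
  have hW : Icc 2 r ⊆ (Icc 2 r \ S.image L) ∪ {j ∈ S.image L | 2 ≤ j} := by
    intro j hj
    by_cases hjS : j ∈ S.image L <;> simp_all
  have hWcard := (card_le_card hW).trans (card_union_le _ _)
  have hfilter : {x ∈ S | L x ∈ Icc 2 r} = {x ∈ S | 2 ≤ L x} :=
    filter_congr fun x _ => by have : L x ≤ r := reachDist_le (hv x); simp only [mem_Icc]; omega
  have hdisj : Disjoint ({w | A v w} : Finset V) ({x | L x ∈ Icc 2 r} : Finset V) := by
    refine disjoint_filter.mpr fun w _ hw => ?_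
    simp [L, reachDist_eq_one_of_adj hirr hw]
  have hsub : ({w | A v w} : Finset V) ∪ ({x | L x ∈ Icc 2 r} : Finset V) ⊆ univ.erase v := by
    intro w hw
    refine mem_erase.mpr ⟨?_, mem_univ w⟩
    rintro rfl
    simp only [mem_union, mem_filter, mem_univ, true_and] at hw
    rcases hw with hw | hw
    · exact hirr _ hw
    · simp [L, (reachDist_eq_zero_iff (ReachWithin.refl 0 w)).mpr rfl] at hw
  have hrest := card_le_card hsub
  rw [card_union_of_disjoint hdisj, card_erase_of_mem (mem_univ v), card_univ,
    ← outDeg_eq_card] at hrest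
  rw [Nat.card_Icc] at hWcard
  rw [hfilter] at hlevels
  have := Fintype.card_pos_iff.mpr ⟨v⟩
  omega

lemma outDeg_add_card_filter_lt (hirr : Irreflexive A) (hv : outEccLe A r v) {S : Finset V}
    (hS : ∀ u ∈ S, ∀ w, A u w → w ∈ S) {u : V} (hu : u ∈ S) :
    outDeg A u + #{w ∈ S | reachDist A v u + 2 ≤ reachDist A v w} < #S := by
  have hdisj : Disjoint ({w | A u w} : Finset V)
      {w ∈ S | reachDist A v u + 2 ≤ reachDist A v w} := by
    refine disjoint_left.mpr fun w hw hfar => ?_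
    have hA : A u w := by simpa using hw
    have := reachDist_le_succ_of_adj (hv u) hA
    have := (mem_filter.mp hfar).2
    omega
  have hsub : ({w | A u w} : Finset V) ∪ {w ∈ S | reachDist A v u + 2 ≤ reachDist A v w} ⊆
      S.erase u := by
    intro w hw
    rcases mem_union.mp hw with hw | hw
    · have hA : A u w := by simpa using hw
      exact mem_erase.mpr ⟨fun h => hirr u (h ▸ hA), hS u hu w hA⟩
    · obtain ⟨hwS, hfar⟩ := mem_filter.mp hw
      exact mem_erase.mpr ⟨by rintro rfl; omega, hwS⟩
  have := card_le_card hsub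
  rw [card_union_of_disjoint hdisj, card_erase_of_mem hu, ← outDeg_eq_card] at this
  have := card_pos.mpr ⟨u, hu⟩
  omega

lemma sum_outDeg_add_farPairCount_le (hirr : Irreflexive A) (hv : outEccLe A r v) {S : Finset V}
    (hS : ∀ u ∈ S, ∀ w, A u w → w ∈ S) :
    ∑ u ∈ S, outDeg A u + farPairCount (reachDist A v) S + #S ≤ #S * #S := by
  calc ∑ u ∈ S, outDeg A u + farPairCount (reachDist A v) S + #S
      = ∑ u ∈ S, (outDeg A u + #{w ∈ S | reachDist A v u + 2 ≤ reachDist A v w} + 1) := by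
        simp only [farPairCount, sum_add_distrib, card_eq_sum_ones]
    _ ≤ ∑ _u ∈ S, #S := sum_le_sum fun u hu => outDeg_add_card_filter_lt hirr hv hS hu
    _ = #S * #S := by rw [sum_const, smul_eq_mul]

lemma sum_outDeg_compl_add_le (hirr : Irreflexive A) (hr : 1 ≤ r)
    (hv : outEccLe A r v) (hecc : ∀ u, ¬ outEccLe A (r - 1) u) {S : Finset V}
    (hS : ∀ u ∉ S, ∃ k, ReachWithin A k u v) (hvS : v ∉ S) :
    ∑ u ∈ Sᶜ, outDeg A u + #{x ∈ S | 2 ≤ reachDist A v x} + #Sᶜ * r ≤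
      #Sᶜ * Fintype.card V + #{j ∈ S.image (reachDist A v) | 2 ≤ j} := by
  have hv' : v ∈ Sᶜ := mem_compl.mpr hvS
  have hothers : ∑ u ∈ Sᶜ.erase v, (outDeg A u + r) ≤ ∑ _u ∈ Sᶜ.erase v, Fintype.card V := by
    refine sum_le_sum fun u hu => outDeg_add_le_card_of_not_outEccLe hirr hr ?_ (hecc u)
    obtain ⟨k, hk⟩ := hS u (mem_compl.mp (mem_of_mem_erase hu))
    exact fun x => ⟨k + r, hk.trans (hv x)⟩
  have hcenter := outDeg_add_card_filter_le_of_center hirr hr hv (hecc v) S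
  rw [sum_add_distrib, sum_const, sum_const, smul_eq_mul, smul_eq_mul] at hothers
  rw [← add_sum_erase _ _ hv', ← card_erase_add_one hv', add_mul, add_mul, one_mul, one_mul]
  omega

end Center

/-- Fridman's theorem: a digraph of order `n` with out-radius `r ≥ 2` has at most
`n(n-r) + (r^2-r-2)/2` arcs. -/
theorem stmt2 [Fintype V] (A : V → V → Prop) (hirr : Irreflexive A)
    (r : ℕ) (hr : 2 ≤ r) (hrad : outRadiusIs A r) :
    arcCard A ≤ Fintype.card V * (Fintype.card V - r) + (r ^ 2 - r - 2) / 2 := by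
  classical
  obtain ⟨⟨v, hv⟩, hecc⟩ := hrad
  set S : Finset V := {u | ¬ ∃ k, ReachWithin A k u v}
  have hvS : v ∉ S := by simpa [S] using ⟨0, rfl⟩
  have hclosed : ∀ u ∈ S, ∀ w, A u w → w ∈ S := by
    simp only [S, mem_filter, mem_univ, true_and]
    exact fun u hu w hA ⟨k, hk⟩ => hu ⟨k + 1, Or.inr ⟨w, hA, hk⟩⟩
  have hlevel : ∀ x ∈ S, 1 ≤ reachDist A v x := fun x hx =>
    Nat.one_le_iff_ne_zero.mpr fun h => hvS ((reachDist_eq_zero_iff (hv x)).mp h ▸ hx)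
  have hT := sum_outDeg_compl_add_le hirr (by omega) hv hecc (by simp [S]) hvS
  have hS := sum_outDeg_add_farPairCount_le hirr hv hclosed
  have hk := card_add_le_card_add_card_image hv (hecc v) S
  have ht := card_pos.mpr ⟨v, mem_compl.mpr hvS⟩
  have hn := card_compl_add_card S
  have hrn : r ≤ Fintype.card V := by have := card_image_le (s := S) (f := reachDist A v); omega
  set c := (r ^ 2 - r - 2) / 2
  have hcore := card_mul_le_farPairCount_add (r - 1 - #Sᶜ) c S hlevel (by omega)
    (mul_le_choose_two_add (by omega) (two_mul_sq_sub_sub_two_div_two hr) (by omega) (by omega))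
  rw [← hn] at hT hrn
  have hT' := (Nat.cast_le (α := ℤ)).mpr hT
  have hS' := (Nat.cast_le (α := ℤ)).mpr hS
  push_cast at hT' hS'
  rw [arcCard_eq_sum_outDeg, ← sum_compl_add_sum S, ← hn]
  zify [hrn]
  linear_combination hT' + hS' + hcore
end

section
/- Let D be a bipartite digraph with parts V_1, V_2, and let v be a vertex of out-eccentricity r, with N_i the set of vertices at distance exactly i from v. If u is in N_i with i even, then N^+(u) is contained in N_1 ∪ N_3 ∪ ... ∪ N_{i+1}; if u is in N_i with i odd, then N^+(u) is contained in N_0 ∪ N_2 ∪ ... ∪ N_{i+1}, and moreover this containment is strict (N^+(u) is a proper subset) when i is odd and r >= 3. -/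
variable {V : Type*}

section Aux
variable {A : V → V → Prop} {P : V → Prop}

lemma rw_succ : ∀ {k : ℕ} {u w : V}, ReachWithin A k u w → ReachWithin A (k+1) u w
  | 0, u, w, h => Or.inl h
  | k+1, u, w, Or.inl h => Or.inl h
  | k+1, u, w, Or.inr ⟨x, hx, hr⟩ => Or.inr ⟨x, hx, rw_succ hr⟩

lemma rw_mono {j k : ℕ} {u w : V} (hjk : j ≤ k) (h : ReachWithin A j u w) :
    ReachWithin A k u w := by
  induction hjk with
  | refl => exact h
  | step _ ih => exact rw_succ ih

lemma rw_trans : ∀ (a : ℕ) {b : ℕ} {u w x : V},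
    ReachWithin A a u w → ReachWithin A b w x → ReachWithin A (a + b) u x
  | 0, b, u, w, x, h1, h2 => by cases h1; simpa using h2
  | a+1, b, u, w, x, Or.inl h1, h2 => by cases h1; exact rw_mono (by omega) h2
  | a+1, b, u, w, x, Or.inr ⟨y, hy, hr⟩, h2 => by
      have : ReachWithin A (a + b + 1) u x := Or.inr ⟨y, hy, rw_trans a hr h2⟩
      exact rw_mono (by omega) this

lemma rw_split : ∀ (a : ℕ) {b : ℕ} {u x : V}, ReachWithin A (a + b) u x →
    ∃ y, ReachWithin A a u y ∧ ReachWithin A b y x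
  | 0, b, u, x, h => ⟨u, rfl, by simpa using h⟩
  | a+1, b, u, x, h => by
      have h' : ReachWithin A ((a + b) + 1) u x := by
        have e : a + 1 + b = (a + b) + 1 := by omega
        rw [e] at h; exact h
      rcases h' with h' | ⟨y, hy, hr⟩
      · subst h'
        exact ⟨u, rw_mono (Nat.zero_le _) (show ReachWithin A 0 u u from rfl),
          rw_mono (Nat.zero_le _) (show ReachWithin A 0 u u from rfl)⟩
      · obtain ⟨z, hz1, hz2⟩ := rw_split a hr
        exact ⟨z, Or.inr ⟨y, hy, hz1⟩, hz2⟩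

lemma rw_parity (hbip : Bipartition A P) : ∀ (k : ℕ) (u w : V), ReachWithin A k u w →
    ∃ l, l ≤ k ∧ ReachWithin A l u w ∧ (Even l ↔ (P u ↔ P w)) := by
  intro k
  induction k with
  | zero => intro u w h; cases h; exact ⟨0, le_refl _, rfl, by simp⟩
  | succ k ih =>
    intro u w h
    rcases h with h | ⟨x, hx, hr⟩
    · cases h; exact ⟨0, by omega, rfl, by simp⟩
    · obtain ⟨l, hl, hrl, hp⟩ := ih x w hr
      refine ⟨l + 1, by omega, Or.inr ⟨x, hx, hrl⟩, ?_⟩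
      have h1 : Even (l + 1) ↔ ¬ Even l := Nat.even_add_one
      have h2 := hbip u x hx
      tauto

lemma distEq_exists {k : ℕ} {v x : V} (h : ReachWithin A k v x) :
    ∃ j, j ≤ k ∧ DistEq A j v x := by
  classical
  have hex : ∃ j, ReachWithin A j v x := ⟨k, h⟩
  exact ⟨Nat.find hex, Nat.find_le h, Nat.find_spec hex,
    fun j hj => Nat.find_min hex hj⟩

lemma distEq_parity (hbip : Bipartition A P) {j : ℕ} {v w : V} (h : DistEq A j v w) :
    Even j ↔ (P v ↔ P w) := by
  obtain ⟨l, hl, hrl, hp⟩ := rw_parity hbip j v w h.1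
  have hlj : l = j := by
    rcases lt_or_eq_of_le hl with h' | h'
    · exact absurd hrl (h.2 l h')
    · exact h'
  rwa [hlj] at hp

lemma nbr_dist (hbip : Bipartition A P) {i : ℕ} {v u w : V}
    (hu : DistEq A i v u) (haw : A u w) :
    ∃ j, j ≤ i + 1 ∧ DistEq A j v w ∧ (Even j ↔ ¬ Even i) := by
  have h1 : ReachWithin A 1 u w := Or.inr ⟨w, haw, rfl⟩
  have h2 : ReachWithin A (i + 1) v w := rw_trans i hu.1 h1
  obtain ⟨j, hj, hd⟩ := distEq_exists h2
  refine ⟨j, hj, hd, ?_⟩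
  have p1 := distEq_parity hbip hu
  have p2 := distEq_parity hbip hd
  have p3 := hbip u w haw
  tauto

end Aux

/-- In a bipartite digraph with out-radius `r`, let `v` be a vertex of out-eccentricity `r`
and `N_i` the set of vertices at distance exactly `i` from `v`. If `u ∈ N_i` with `i` even,
then `N⁺(u) ⊆ N_1 ∪ N_3 ∪ ⋯ ∪ N_{i+1}`; if `i` is odd, then
`N⁺(u) ⊆ N_0 ∪ N_2 ∪ ⋯ ∪ N_{i+1}`, and the containment is proper when `r ≥ 3`. -/
theorem stmt10 [Fintype V] (A : V → V → Prop)
    (P : V → Prop) (hbip : Bipartition A P)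
    (r : ℕ) (hrad : outRadiusIs A r)
    (v : V) (hecc : outEccLe A r v ∧ ¬ outEccLe A (r - 1) v) :
    ∀ (i : ℕ) (u : V), DistEq A i v u →
      (Even i → ∀ w, A u w → ∃ j, Odd j ∧ j ≤ i + 1 ∧ DistEq A j v w) ∧
      (Odd i →
        (∀ w, A u w → ∃ j, Even j ∧ j ≤ i + 1 ∧ DistEq A j v w) ∧
        (3 ≤ r → ∃ w, (∃ j, Even j ∧ j ≤ i + 1 ∧ DistEq A j v w) ∧ ¬ A u w)) := by
  intro i u hu
  constructor
  · intro hi w haw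
    obtain ⟨j, hj, hd, hp⟩ := nbr_dist hbip hu haw
    exact ⟨j, Nat.not_even_iff_odd.mp (fun he => (hp.mp he) hi), hj, hd⟩
  · intro hi
    have hine : ¬ Even i := Nat.not_even_iff_odd.mpr hi
    constructor
    · intro w haw
      obtain ⟨j, hj, hd, hp⟩ := nbr_dist hbip hu haw
      exact ⟨j, hp.mpr hine, hj, hd⟩
    · intro hr3
      by_contra hc
      push_neg at hc
      have hi1 : 1 ≤ i := by
        have := Nat.odd_iff.mp hi; omega
      refine hrad.2 u (fun x => ?_)
      obtain ⟨j, hjr, hdj⟩ := distEq_exists (hecc.1 x)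
      rcases Nat.lt_or_ge (i + 1) j with hcase | hcase
      · -- j > i + 1 : go via the vertex at position i+1 on a shortest path
        have h' : ReachWithin A ((i + 1) + (j - (i + 1))) v x := by
          have e : (i + 1) + (j - (i + 1)) = j := by omega
          rw [e]; exact hdj.1
        obtain ⟨y, hy1, hy2⟩ := rw_split (i + 1) h'
        obtain ⟨j', hj', hdy⟩ := distEq_exists hy1
        have hj'eq : j' = i + 1 := by
          rcases lt_or_eq_of_le hj' with h'' | h''
          · exfalso
            have := rw_trans j' hdy.1 hy2
            exact hdj.2 _ (by omega) this
          · exact h''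
        have hAuy : A u y := hc y ⟨i + 1, Nat.even_add_one.mpr hine, le_refl _,
          hj'eq ▸ hdy⟩
        have : ReachWithin A ((j - (i + 1)) + 1) u x := Or.inr ⟨y, hAuy, hy2⟩
        exact rw_mono (by omega) this
      · rcases Nat.even_or_odd j with hje | hjo
        · have hAux : A u x := hc x ⟨j, hje, hcase, hdj⟩
          have : ReachWithin A 1 u x := Or.inr ⟨x, hAux, rfl⟩
          exact rw_mono (by omega) this
        · have hj1 : 1 ≤ j := by
            have := Nat.odd_iff.mp hjo; omega
          have h' : ReachWithin A ((j - 1) + 1) v x := by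
            have e : (j - 1) + 1 = j := by omega
            rw [e]; exact hdj.1
          obtain ⟨y, hy1, hy2⟩ := rw_split (j - 1) h'
          rcases hy2 with hy2 | ⟨z, hyz, hz⟩
          · exfalso; cases hy2; exact hdj.2 _ (by omega) hy1
          · cases hz
            obtain ⟨j', hj', hdy⟩ := distEq_exists hy1
            have hj'even : Even j' := by
              have p1 := distEq_parity hbip hdy
              have p2 := distEq_parity hbip hdj
              have p3 := hbip y x hyz
              have : ¬ Even j := Nat.not_even_iff_odd.mpr hjo
              tauto
            have hAuy : A u y := hc y ⟨j', hj'even, by omega, hdy⟩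
            have : ReachWithin A 2 u x := Or.inr ⟨y, hAuy, Or.inr ⟨x, hyz, rfl⟩⟩
            exact rw_mono (by omega) this
end
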